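/- arXiv:2602.14631 — 2 statements merged into one kernel-verified Lean document; each statement's English description precedes it below -/
import Mathlib

section
/- Let u : ℝ≥0 → ℝ be strictly quasiconcave and attain its maximum at a unique point x⋆ ∈ ℝ≥0, let c₁ : ℝ≥0 → ℝ≥0 be strictly increasing, let x_s ∈ ℝ≥0, and let V : ℝ≥0 → ℝ be upper semicontinuous. Then V attains a maximum on the set max(ℝ≥0, ≽) of maximal elements of the one-many ordering; that is, there exists x̂ ∈ max(ℝ≥0, ≽) such that V(x̂) ≥ V(x) for all x ∈ max(ℝ≥0, ≽). -/
open NNReal Set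

/-- Strict quasiconcavity of a function `u : ℝ≥0 → ℝ`:
for all distinct `x, y` and all `λ ∈ (0,1)`, `u (λx + (1-λ)y) > min (u x) (u y)`. -/
def StrictQuasiconcave (u : ℝ≥0 → ℝ) : Prop :=
  ∀ x y : ℝ≥0, x ≠ y → ∀ l : ℝ≥0, 0 < l → l < 1 →
    min (u x) (u y) < u (l * x + (1 - l) * y)

/-- The one-many ordering `x ≽ y` on `ℝ≥0`, given personal utility `u`,
cost `c₁` of current social distance, and social reference point `xs`. -/
def OneMany (u : ℝ≥0 → ℝ) (c₁ : ℝ≥0 → ℝ≥0) (xs : ℝ≥0) (x y : ℝ≥0) : Prop :=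
  u y ≤ u x ∧ c₁ (nndist x xs) ≤ c₁ (nndist y xs)

/-- The strict part `x ≻ y` of the one-many ordering. -/
def OneManyStrict (u : ℝ≥0 → ℝ) (c₁ : ℝ≥0 → ℝ≥0) (xs : ℝ≥0) (x y : ℝ≥0) : Prop :=
  OneMany u c₁ xs x y ∧ ¬ OneMany u c₁ xs y x

/-- The set `max(ℝ≥0, ≽)` of maximal elements of the one-many ordering:
the agent's consideration set. -/
def maxSet (u : ℝ≥0 → ℝ) (c₁ : ℝ≥0 → ℝ≥0) (xs : ℝ≥0) : Set ℝ≥0 :=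
  {x : ℝ≥0 | ¬ ∃ y : ℝ≥0, OneManyStrict u c₁ xs y x}

/-! Strict quasiconcavity makes `u` strictly increasing up to its peak `xstar` and strictly
decreasing after it. Hence no `x ∈ [[xs, xstar]]` is dominated: for `y ≠ x`, either `x` lies
between `y` and the peak, so `u y < u x`, or `x` lies between `xs` and `y`, so `y` is farther from
`xs`. Every point outside is strictly dominated by the nearer endpoint. So `max(ℝ≥0, ≽) = [[xs, xstar]]`, a nonempty compact set, on which the upper
semicontinuous `V` attains its maximum. -/

open scoped Interval

section UnorderedInterval

variable {α : Type*} [LinearOrder α] {x y a b : α}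

lemma mem_uIcc_or_mem_uIcc_of_notMem (hx : x ∉ [[a, b]]) : a ∈ [[x, b]] ∨ b ∈ [[x, a]] := by
  simp only [mem_uIcc] at *
  grind

lemma mem_uIcc_of_notMem_uIcc (hx : x ∈ [[a, b]]) (hy : x ∉ [[y, b]]) : x ∈ [[a, y]] := by
  simp only [mem_uIcc] at *
  grind

lemma StrictMonoOn.lt_of_mem_uIcc_of_strictAntiOn {β : Type*} [Preorder β] {u : α → β} {m : α}
    (hmono : StrictMonoOn u (Iic m)) (hanti : StrictAntiOn u (Ici m)) (hx : x ∈ [[y, m]])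
    (hxy : x ≠ y) : u y < u x := by
  rcases le_total y m with hym | hmy
  · rw [uIcc_of_le hym] at hx
    exact hmono (hx.1.trans hx.2) hx.2 (hx.1.lt_of_ne' hxy)
  · rw [uIcc_of_ge hmy] at hx
    exact hanti hx.1 (hx.1.trans hx.2) (hx.2.lt_of_ne hxy)

end UnorderedInterval

lemma NNReal.nndist_lt_of_mem_uIcc {x y z : ℝ≥0} (h : x ∈ [[z, y]]) (hxy : x ≠ y) :
    nndist x z < nndist y z := by
  rw [← NNReal.coe_lt_coe, coe_nndist, coe_nndist, NNReal.dist_eq, NNReal.dist_eq]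
  rw [← NNReal.coe_inj.ne] at hxy
  simp only [mem_uIcc, ← NNReal.coe_le_coe] at h
  grind [abs_of_nonneg, abs_of_nonpos]

namespace StrictQuasiconcave

variable {u : ℝ≥0 → ℝ} {m : ℝ≥0}

lemma min_lt_of_lt_of_lt (hu : StrictQuasiconcave u) {a b c : ℝ≥0} (hab : a < b) (hbc : b < c) :
    min (u a) (u c) < u b := by
  have hac : a < c := hab.trans hbc
  set l := (c - b) / (c - a)
  have hl1 : l < 1 := (div_lt_one (tsub_pos_of_lt hac)).2 (tsub_lt_tsub_left_of_le hbc.le hab)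
  have hb : l * a + (1 - l) * c = b := by
    apply NNReal.coe_injective
    have : (0 : ℝ) < c - a := sub_pos.2 hac
    simp only [l, NNReal.coe_add, NNReal.coe_mul, NNReal.coe_sub hl1.le, NNReal.coe_one,
      NNReal.coe_div, NNReal.coe_sub hbc.le, NNReal.coe_sub hac.le]
    field_simp
    ring
  simpa only [hb] using hu a c hac.ne l (div_pos (tsub_pos_of_lt hbc) (tsub_pos_of_lt hac)) hl1

lemma lt_of_ne (hu : StrictQuasiconcave u) (hm : ∀ y, u y ≤ u m) {y : ℝ≥0} (hy : y ≠ m) :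
    u y < u m := by
  simpa using (hu y m hy 2⁻¹ (by norm_num) (by norm_num)).trans_le (hm _)

lemma strictMonoOn_Iic (hu : StrictQuasiconcave u) (hm : ∀ y, u y ≤ u m) :
    StrictMonoOn u (Iic m) := by
  intro a _ b hb hab
  rcases (mem_Iic.1 hb).lt_or_eq with hbm | rfl
  · simpa [min_eq_left (hm a)] using hu.min_lt_of_lt_of_lt hab hbm
  · exact hu.lt_of_ne hm hab.ne

lemma strictAntiOn_Ici (hu : StrictQuasiconcave u) (hm : ∀ y, u y ≤ u m) :
    StrictAntiOn u (Ici m) := by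
  intro a ha b _ hab
  rcases (mem_Ici.1 ha).lt_or_eq with hma | rfl
  · simpa [min_eq_right (hm b)] using hu.min_lt_of_lt_of_lt hma hab
  · exact hu.lt_of_ne hm hab.ne'

end StrictQuasiconcave

section OneMany

variable {u : ℝ≥0 → ℝ} {c₁ : ℝ≥0 → ℝ≥0} {xs m x : ℝ≥0}

lemma exists_oneManyStrict_of_notMem_uIcc (hmono : StrictMonoOn u (Iic m))
    (hanti : StrictAntiOn u (Ici m)) (hc : Monotone c₁) (hx : x ∉ [[xs, m]]) :
    ∃ y, OneManyStrict u c₁ xs y x := by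
  obtain ⟨y, hyx, hym, hyxs⟩ : ∃ y ≠ x, y ∈ [[x, m]] ∧ y ∈ [[xs, x]] := by
    rcases mem_uIcc_or_mem_uIcc_of_notMem hx with h | h
    · exact ⟨xs, fun h' => hx (h' ▸ left_mem_uIcc), h, left_mem_uIcc⟩
    · exact ⟨m, fun h' => hx (h' ▸ right_mem_uIcc), right_mem_uIcc, uIcc_comm x xs ▸ h⟩
  have hu : u x < u y := hmono.lt_of_mem_uIcc_of_strictAntiOn hanti hym hyx
  exact ⟨y, ⟨hu.le, hc (NNReal.nndist_lt_of_mem_uIcc hyxs hyx).le⟩, fun h => h.1.not_gt hu⟩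

lemma eq_of_oneMany_of_mem_uIcc (hmono : StrictMonoOn u (Iic m)) (hanti : StrictAntiOn u (Ici m))
    (hc : StrictMono c₁) (hx : x ∈ [[xs, m]]) {y : ℝ≥0} (hyx : OneMany u c₁ xs y x) : y = x := by
  by_contra hne
  by_cases h : x ∈ [[y, m]]
  · exact (hmono.lt_of_mem_uIcc_of_strictAntiOn hanti h (Ne.symm hne)).not_ge hyx.1
  · exact (NNReal.nndist_lt_of_mem_uIcc (mem_uIcc_of_notMem_uIcc hx h) (Ne.symm hne)).not_ge
      (hc.le_iff_le.1 hyx.2)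

lemma maxSet_eq_uIcc (hmono : StrictMonoOn u (Iic m)) (hanti : StrictAntiOn u (Ici m))
    (hc : StrictMono c₁) : maxSet u c₁ xs = [[xs, m]] := by
  ext x
  refine ⟨fun hx => ?_, ?_⟩
  · by_contra hx'
    exact hx (exists_oneManyStrict_of_notMem_uIcc hmono hanti hc.monotone hx')
  · rintro hx ⟨y, hyx, hxy⟩
    obtain rfl := eq_of_oneMany_of_mem_uIcc hmono hanti hc hx hyx
    exact hxy hyx

end OneMany

theorem exists_fundamental_choice_general
    (u : ℝ≥0 → ℝ) (c₁ : ℝ≥0 → ℝ≥0) (xstar xs : ℝ≥0)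
    (hu : StrictQuasiconcave u)
    (hmax : ∀ y : ℝ≥0, u y ≤ u xstar)
    (hc : StrictMono c₁)
    (V : ℝ≥0 → ℝ) (hV : UpperSemicontinuous V) :
    ∃ xhat ∈ maxSet u c₁ xs, ∀ x ∈ maxSet u c₁ xs, V x ≤ V xhat := by
  rw [maxSet_eq_uIcc (hu.strictMonoOn_Iic hmax) (hu.strictAntiOn_Ici hmax) hc]
  exact (hV.upperSemicontinuousOn _).exists_isMaxOn nonempty_uIcc isCompact_uIcc

theorem exists_fundamental_choice
    (u : ℝ≥0 → ℝ) (c₁ : ℝ≥0 → ℝ≥0) (xstar xs : ℝ≥0)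
    (hu : StrictQuasiconcave u)
    (hmax : ∀ y : ℝ≥0, u y ≤ u xstar)
    (huniq : ∀ y : ℝ≥0, (∀ z : ℝ≥0, u z ≤ u y) → y = xstar)
    (hc : StrictMono c₁)
    (V : ℝ≥0 → ℝ) (hV : UpperSemicontinuous V) :
    ∃ xhat ∈ maxSet u c₁ xs, ∀ x ∈ maxSet u c₁ xs, V x ≤ V xhat :=
  exists_fundamental_choice_general u c₁ xstar xs hu hmax hc V hV
end

section
/- Let u : ℝ≥0 → ℝ be strictly quasiconcave and attain its maximum at a unique point x⋆ ∈ ℝ≥0, let c₁ : ℝ≥0 → ℝ≥0 be strictly increasing, let x_s ∈ ℝ≥0, and let V : ℝ≥0 → ℝ be upper semicontinuous. Then there exist two asymmetric binary relations ≻₁ and ≻₂ on ℝ≥0 such that the set of maximizers of V over max(ℝ≥0, ≽) equals max(max(ℝ≥0, ≻₁), ≻₂), where for a set A ⊆ ℝ≥0 and a relation ≻, max(A, ≻) = {x ∈ A : there is no y ∈ A with y ≻ x}. In particular this set of maximizers is nonempty, i.e., the two-stage procedure defines a partial choice correspondence that is rational by two sequential criteria. -/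
open NNReal Set

/-- The set of elements of `A` not strictly dominated within `A` by the relation `r`. -/
def maxOf (r : ℝ≥0 → ℝ≥0 → Prop) (A : Set ℝ≥0) : Set ℝ≥0 :=
  {x ∈ A | ¬ ∃ y ∈ A, r y x}

/-!
Strict quasiconcavity with peak `xstar` makes `u` strictly increasing below `xstar` and
strictly decreasing above it, and a strictly increasing `c₁` turns the cost comparison into a
comparison of distances to `xs`. Hence the maximal elements of `≽` are exactly the points
between `xstar` and `xs`: outside that interval the nearer endpoint strictly dominates, inside
it `u` and the distance to `xs` move in opposite directions. With `≻₁` the strict one-many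
order and `≻₂` the strict order induced by `V`, the two stages select the `V`-maximizers on
this compact interval, which exist because `V` is upper semicontinuous.
-/

namespace StrictQuasiconcave

variable {u : ℝ≥0 → ℝ} (hu : StrictQuasiconcave u)
include hu

theorem min_lt_of_lt_of_lt_s5 {x b z : ℝ≥0} (hxb : x < b) (hbz : b < z) :
    min (u x) (u z) < u b := by
  have hxz : x < z := hxb.trans hbz
  have hxzr : (x : ℝ) < z := hxz
  have hxbr : (x : ℝ) < b := hxb
  have hbzr : (b : ℝ) < z := hbz
  set l : ℝ≥0 := (z - b) / (z - x) with hl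
  have hl_coe : (l : ℝ) = (z - b) / (z - x) := by
    rw [hl, NNReal.coe_div, NNReal.coe_sub hbz.le, NNReal.coe_sub hxz.le]
  have hl0 : 0 < l := by
    rw [← NNReal.coe_pos, hl_coe]
    exact div_pos (by linarith) (by linarith)
  have hl1 : l < 1 := by
    rw [← NNReal.coe_lt_coe, hl_coe, NNReal.coe_one, div_lt_one (by linarith)]
    linarith
  have hb : l * x + (1 - l) * z = b := by
    apply NNReal.coe_injective
    push_cast [NNReal.coe_sub hl1.le]
    rw [hl_coe]
    field_simp [sub_ne_zero.2 hxzr.ne']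
    ring
  simpa only [hb] using hu x z hxz.ne l hl0 hl1

variable {xstar : ℝ≥0} (hmax : ∀ y, u y ≤ u xstar)
include hmax

theorem lt_of_ne_of_forall_le {x : ℝ≥0} (hx : x ≠ xstar) : u x < u xstar := by
  by_contra! hle
  have hmid := hu x xstar hx (1 / 2) (by norm_num) (by norm_num)
  rw [min_eq_right hle] at hmid
  exact (hmid.trans_le (hmax _)).false

theorem strictMonoOn_Iic_s5 : StrictMonoOn u (Iic xstar) := by
  intro x _ b hb hxb
  have hux : u x < u xstar := hu.lt_of_ne_of_forall_le hmax (hxb.trans_le hb).ne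
  rcases (mem_Iic.1 hb).lt_or_eq with hb | rfl
  · simpa only [min_eq_left hux.le] using hu.min_lt_of_lt_of_lt_s5 hxb hb
  · exact hux

theorem strictAntiOn_Ici_s5 : StrictAntiOn u (Ici xstar) := by
  intro b hb x _ hbx
  have hux : u x < u xstar := hu.lt_of_ne_of_forall_le hmax (hb.trans_lt hbx).ne'
  rcases (mem_Ici.1 hb).lt_or_eq with hb | rfl
  · simpa only [min_eq_right hux.le] using hu.min_lt_of_lt_of_lt_s5 hb hbx
  · exact hux

end StrictQuasiconcave

namespace NNReal

theorem dist_lt_dist_of_lt_of_le {x y z : ℝ≥0} (hxy : x < y) (hyz : y ≤ z) :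
    dist y z < dist x z := by
  have hxy : (x : ℝ) < y := hxy
  have hyz : (y : ℝ) ≤ z := hyz
  rw [dist_eq, dist_eq, abs_of_nonpos (by linarith), abs_of_nonpos (by linarith)]
  linarith

theorem dist_lt_dist_of_le_of_lt {x y z : ℝ≥0} (hzy : z ≤ y) (hyx : y < x) :
    dist y z < dist x z := by
  have hzy : (z : ℝ) ≤ y := hzy
  have hyx : (y : ℝ) < x := hyx
  rw [dist_eq, dist_eq, abs_of_nonneg (by linarith), abs_of_nonneg (by linarith)]
  linarith

end NNReal

section OneMany

variable {u : ℝ≥0 → ℝ} {c₁ : ℝ≥0 → ℝ≥0} {xs : ℝ≥0} (hc : StrictMono c₁)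
include hc

theorem oneMany_iff {x y : ℝ≥0} :
    OneMany u c₁ xs x y ↔ u y ≤ u x ∧ dist x xs ≤ dist y xs := by
  rw [OneMany, hc.le_iff_le, ← NNReal.coe_le_coe, coe_nndist, coe_nndist]

theorem oneManyStrict_of_lt_of_dist_le {x y : ℝ≥0} (hu : u x < u y)
    (hd : dist y xs ≤ dist x xs) : OneManyStrict u c₁ xs y x :=
  ⟨(oneMany_iff hc).2 ⟨hu.le, hd⟩, fun h => hu.not_ge ((oneMany_iff hc).1 h).1⟩

theorem mem_maxSet_iff {x : ℝ≥0} : x ∈ maxSet u c₁ xs ↔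
    ∀ y, u x ≤ u y → dist y xs ≤ dist x xs → u y ≤ u x ∧ dist x xs ≤ dist y xs := by
  simp only [maxSet, OneManyStrict, oneMany_iff hc, mem_ofPred_eq, not_exists, not_and,
    Classical.not_imp, not_not, and_imp]

theorem maxSet_eq_uIcc_s5 {xstar : ℝ≥0} (hu : StrictQuasiconcave u) (hmax : ∀ y, u y ≤ u xstar) :
    maxSet u c₁ xs = uIcc xstar xs := by
  have hinc := hu.strictMonoOn_Iic_s5 hmax
  have hdec := hu.strictAntiOn_Ici_s5 hmax
  ext x
  constructor
  · intro hx
    by_contra hout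
    rw [uIcc, mem_Icc, not_and_or, not_le, not_le] at hout
    rcases hout with hlt | hgt
    · refine hx ⟨_, oneManyStrict_of_lt_of_dist_le hc ?_
        (NNReal.dist_lt_dist_of_lt_of_le hlt (min_le_right _ _)).le⟩
      exact hinc (hlt.le.trans (min_le_left _ _)) (min_le_left xstar xs) hlt
    · refine hx ⟨_, oneManyStrict_of_lt_of_dist_le hc ?_
        (NNReal.dist_lt_dist_of_le_of_lt (le_max_right _ _) hgt).le⟩
      exact hdec (le_max_left xstar xs) ((le_max_left _ _).trans hgt.le) hgt
  · intro hx
    rw [mem_maxSet_iff hc]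
    intro y huy hdy
    suffices y = x by subst this; exact ⟨le_rfl, le_rfl⟩
    by_contra hyx
    rcases le_total xstar xs with h | h
    · rw [uIcc_of_le h] at hx
      rcases lt_or_gt_of_ne hyx with hlt | hgt
      · exact (NNReal.dist_lt_dist_of_lt_of_le hlt hx.2).not_ge hdy
      · exact (hdec hx.1 (hx.1.trans hgt.le) hgt).not_ge huy
    · rw [uIcc_of_ge h] at hx
      rcases lt_or_gt_of_ne hyx with hlt | hgt
      · exact (hinc (hlt.le.trans hx.2) hx.2 hlt).not_ge huy
      · exact (NNReal.dist_lt_dist_of_le_of_lt hx.1 hgt).not_ge hdy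

end OneMany

theorem maxOf_univ_oneManyStrict (u : ℝ≥0 → ℝ) (c₁ : ℝ≥0 → ℝ≥0) (xs : ℝ≥0) :
    maxOf (OneManyStrict u c₁ xs) univ = maxSet u c₁ xs := by
  ext
  simp [maxOf, maxSet]

theorem maxOf_lt_comp_eq {β : Type*} [LinearOrder β] (V : ℝ≥0 → β) (A : Set ℝ≥0) :
    maxOf (fun a b => V b < V a) A = {x ∈ A | ∀ y ∈ A, V y ≤ V x} := by
  ext
  simp [maxOf]

theorem rational_by_two_sequential_criteria_general
    (u : ℝ≥0 → ℝ) (c₁ : ℝ≥0 → ℝ≥0) (xstar xs : ℝ≥0)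
    (hu : StrictQuasiconcave u)
    (hmax : ∀ y : ℝ≥0, u y ≤ u xstar)
    (hc : StrictMono c₁)
    (V : ℝ≥0 → ℝ) (hV : UpperSemicontinuous V) :
    ∃ r₁ r₂ : ℝ≥0 → ℝ≥0 → Prop,
      (∀ x y, r₁ x y → ¬ r₁ y x) ∧
      (∀ x y, r₂ x y → ¬ r₂ y x) ∧
      {x ∈ maxSet u c₁ xs | ∀ y ∈ maxSet u c₁ xs, V y ≤ V x}
        = maxOf r₂ (maxOf r₁ Set.univ) ∧
      {x ∈ maxSet u c₁ xs | ∀ y ∈ maxSet u c₁ xs, V y ≤ V x}.Nonempty := by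
  refine ⟨OneManyStrict u c₁ xs, fun a b => V b < V a, fun x y h h' => h.2 h'.1,
    fun x y h h' => h.asymm h', ?_, ?_⟩
  · rw [maxOf_univ_oneManyStrict, maxOf_lt_comp_eq]
  · rw [maxSet_eq_uIcc_s5 hc hu hmax]
    obtain ⟨x, hx, hxmax⟩ :=
      (hV.upperSemicontinuousOn _).exists_isMaxOn nonempty_uIcc isCompact_uIcc
    exact ⟨x, hx, isMaxOn_iff.1 hxmax⟩

theorem rational_by_two_sequential_criteria
    (u : ℝ≥0 → ℝ) (c₁ : ℝ≥0 → ℝ≥0) (xstar xs : ℝ≥0)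
    (hu : StrictQuasiconcave u)
    (hmax : ∀ y : ℝ≥0, u y ≤ u xstar)
    (huniq : ∀ y : ℝ≥0, (∀ z : ℝ≥0, u z ≤ u y) → y = xstar)
    (hc : StrictMono c₁)
    (V : ℝ≥0 → ℝ) (hV : UpperSemicontinuous V) :
    ∃ r₁ r₂ : ℝ≥0 → ℝ≥0 → Prop,
      (∀ x y, r₁ x y → ¬ r₁ y x) ∧
      (∀ x y, r₂ x y → ¬ r₂ y x) ∧
      {x ∈ maxSet u c₁ xs | ∀ y ∈ maxSet u c₁ xs, V y ≤ V x}
        = maxOf r₂ (maxOf r₁ Set.univ) ∧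
      {x ∈ maxSet u c₁ xs | ∀ y ∈ maxSet u c₁ xs, V y ≤ V x}.Nonempty :=
  rational_by_two_sequential_criteria_general u c₁ xstar xs hu hmax hc V hV
end
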